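/- Let K, K′ ⊆ ℝ^n be locally anti-blocking convex bodies. For σ ∈ {−1,1}^n write K_σ = K ∩ σℝ_+^n and K′_σ = K′ ∩ σℝ_+^n. Then K + K′ = ⋃_{σ ∈ {−1,1}^n} (K_σ + K′_σ), and for distinct σ, τ the sets K_σ + K′_σ and K_τ + K′_τ have intersection of Lebesgue measure zero. -/

import Mathlib

/-!
A locally anti-blocking convex body is closed under moving any single coordinate of a point
towards `0`. So if `x ∈ K`, `y ∈ K'` and `x i * y i < 0`, the smaller of `|x i|`, `|y i|` can be
shifted from one summand to the other without changing `x + y`, after which `x i * y i = 0`.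
Doing this coordinate by coordinate writes every point of `K + K'` as `x + y` with `x` and `y`
in a common closed orthant. Distinct closed orthants meet inside a coordinate hyperplane, a
Lebesgue-null set.
-/

open MeasureTheory
open scoped Pointwise

noncomputable section

/-- The nonnegative orthant `ℝ₊ⁿ`. -/
def nonnegOrthant (n : ℕ) : Set (EuclideanSpace ℝ (Fin n)) := {x | ∀ i, 0 ≤ x i}

/-- The sign `±1` associated to a boolean. -/
def sgn (b : Bool) : ℝ := if b then 1 else -1

/-- The closed orthant `σ ℝ₊ⁿ` corresponding to a sign vector `σ ∈ {-1,1}ⁿ`. -/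
def signedOrthant {n : ℕ} (σ : Fin n → Bool) : Set (EuclideanSpace ℝ (Fin n)) :=
  {x | ∀ i, 0 ≤ sgn (σ i) * x i}

/-- Coordinatewise reflection `σ S = {(σ₁x₁, …, σₙxₙ) : x ∈ S}`. -/
def sigmaAct {n : ℕ} (σ : Fin n → Bool) (S : Set (EuclideanSpace ℝ (Fin n))) :
    Set (EuclideanSpace ℝ (Fin n)) :=
  (fun x : EuclideanSpace ℝ (Fin n) => (WithLp.toLp 2 (fun i => sgn (σ i) * x i) : EuclideanSpace ℝ (Fin n))) '' S

/-- Orthogonal projection onto the coordinate subspace `span {eᵢ : i ∈ I}`. -/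
def coordProj {n : ℕ} (I : Finset (Fin n)) (x : EuclideanSpace ℝ (Fin n)) :
    EuclideanSpace ℝ (Fin n) :=
  (WithLp.toLp 2 (fun i => if i ∈ I then x i else 0) : EuclideanSpace ℝ (Fin n))

/-- The coordinate subspace `span {eᵢ : i ∈ I}`, as a set. -/
def coordSubspace {n : ℕ} (I : Finset (Fin n)) : Set (EuclideanSpace ℝ (Fin n)) :=
  {x | ∀ i ∉ I, x i = 0}

/-- A set `K ⊆ ℝ₊ⁿ` is anti-blocking if for every coordinate subspace `E` the orthogonal
projection `P_E K` equals the section `K ∩ E`. -/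
def IsAntiBlocking {n : ℕ} (K : Set (EuclideanSpace ℝ (Fin n))) : Prop :=
  K ⊆ nonnegOrthant n ∧ ∀ I : Finset (Fin n), coordProj I '' K = K ∩ coordSubspace I

/-- `K` is locally anti-blocking if `(σK) ∩ ℝ₊ⁿ` is anti-blocking for every sign vector `σ`. -/
def IsLocallyAntiBlocking {n : ℕ} (K : Set (EuclideanSpace ℝ (Fin n))) : Prop :=
  ∀ σ : Fin n → Bool, IsAntiBlocking (sigmaAct σ K ∩ nonnegOrthant n)

/-- The coordinate simplex `conv{0, e₁, …}` in the Euclidean space with coordinates `ι`. -/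
def coordSimplex (ι : Type*) [Fintype ι] [DecidableEq ι] : Set (EuclideanSpace ℝ ι) :=
  convexHull ℝ (insert 0 (Set.range fun i : ι => EuclideanSpace.single i (1 : ℝ)))

/-- Restriction to the coordinates in `I`, realizing the orthogonal projection onto
`span {eᵢ : i ∈ I}` as a map onto a `#I`-dimensional Euclidean space (so that volumes of
images compute lower-dimensional Lebesgue measures of coordinate projections). -/
def restrictCoords {n : ℕ} (I : Finset (Fin n)) (x : EuclideanSpace ℝ (Fin n)) :
    EuclideanSpace ℝ ↥I :=
  (WithLp.toLp 2 (fun i => x i) : EuclideanSpace ℝ ↥I)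

def signFlip {n : ℕ} (σ : Fin n → Bool) (x : EuclideanSpace ℝ (Fin n)) :
    EuclideanSpace ℝ (Fin n) :=
  WithLp.toLp 2 (fun i => sgn (σ i) * x i)

lemma sgn_mul_self (b : Bool) : sgn b * sgn b = 1 := by cases b <;> norm_num [sgn]

lemma exists_sgn_mul_nonneg {a b : ℝ} (h : 0 ≤ a * b) :
    ∃ s : Bool, 0 ≤ sgn s * a ∧ 0 ≤ sgn s * b := by
  rcases le_total 0 (a + b) with hab | hab
  · exact ⟨true, by norm_num [sgn]; constructor <;> nlinarith⟩
  · exact ⟨false, by norm_num [sgn]; constructor <;> nlinarith⟩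

lemma signFlip_involutive {n : ℕ} (σ : Fin n → Bool) : Function.Involutive (signFlip σ) := by
  intro x
  ext i
  simp [signFlip, ← mul_assoc, sgn_mul_self]

lemma mem_sigmaAct_iff {n : ℕ} {σ : Fin n → Bool} {K : Set (EuclideanSpace ℝ (Fin n))}
    {y : EuclideanSpace ℝ (Fin n)} : y ∈ sigmaAct σ K ↔ signFlip σ y ∈ K := by
  change y ∈ signFlip σ '' K ↔ _
  rw [(signFlip_involutive σ).image_eq_preimage_symm, Set.mem_preimage]

lemma coordProj_signFlip {n : ℕ} (I : Finset (Fin n)) (σ : Fin n → Bool)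
    (x : EuclideanSpace ℝ (Fin n)) : coordProj I (signFlip σ x) = signFlip σ (coordProj I x) := by
  ext i
  by_cases hi : i ∈ I <;> simp [coordProj, signFlip, hi]

lemma IsAntiBlocking.coordProj_mem {n : ℕ} {K : Set (EuclideanSpace ℝ (Fin n))}
    (hK : IsAntiBlocking K) {x : EuclideanSpace ℝ (Fin n)} (hx : x ∈ K) (I : Finset (Fin n)) :
    coordProj I x ∈ K :=
  ((hK.2 I).subset ⟨x, hx, rfl⟩).1

lemma IsLocallyAntiBlocking.coordProj_mem {n : ℕ} {K : Set (EuclideanSpace ℝ (Fin n))}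
    (hK : IsLocallyAntiBlocking K) {x : EuclideanSpace ℝ (Fin n)} (hx : x ∈ K)
    (I : Finset (Fin n)) : coordProj I x ∈ K := by
  choose σ hσ using fun i => exists_sgn_mul_nonneg (mul_self_nonneg (x i))
  have hflip : signFlip σ x ∈ sigmaAct σ K ∩ nonnegOrthant n :=
    ⟨mem_sigmaAct_iff.2 (by rwa [signFlip_involutive]), fun i => (hσ i).1⟩
  have := ((hK σ).coordProj_mem hflip I).1
  rwa [coordProj_signFlip, mem_sigmaAct_iff, signFlip_involutive] at this

lemma coordProj_erase_eq_sub_single {n : ℕ} (x : EuclideanSpace ℝ (Fin n)) (i : Fin n) :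
    coordProj (Finset.univ.erase i) x = x - EuclideanSpace.single i (x i) := by
  ext j
  by_cases hj : j = i <;> simp [coordProj, hj]

lemma IsLocallyAntiBlocking.sub_single_mem {n : ℕ} {K : Set (EuclideanSpace ℝ (Fin n))}
    (hK : IsLocallyAntiBlocking K) (hconv : Convex ℝ K) {x : EuclideanSpace ℝ (Fin n)}
    (hx : x ∈ K) (i : Fin n) {t : ℝ} (ht : t ∈ Set.uIcc 0 (x i)) :
    x - EuclideanSpace.single i t ∈ K := by
  have hzero : x - EuclideanSpace.single i (x i) ∈ K := by
    rw [← coordProj_erase_eq_sub_single]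
    exact hK.coordProj_mem hx _
  rw [← segment_eq_uIcc] at ht
  obtain ⟨a, b, ha, hb, hab, rfl⟩ := ht
  convert hconv hx hzero ha hb hab using 1
  ext j
  rcases eq_or_ne j i with rfl | hj
  · simp
    linear_combination -(x j) * hab
  · simp [hj]
    linear_combination -(x j) * hab

lemma exists_mem_uIcc_mul_nonneg (a b : ℝ) :
    ∃ t ∈ Set.uIcc 0 a, -t ∈ Set.uIcc 0 b ∧ 0 ≤ (a - t) * (b + t) := by
  by_cases hab : 0 ≤ a * b
  · exact ⟨0, Set.left_mem_uIcc, by simp, by simpa using hab⟩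
  simp only [Set.mem_uIcc]
  rcases lt_or_ge a 0 with ha | ha
  · have hb : 0 < b := by nlinarith
    rcases le_total (-a) b with h | h
    · exact ⟨a, Or.inr ⟨le_rfl, ha.le⟩, Or.inl ⟨by linarith, h⟩, by simp⟩
    · exact ⟨-b, Or.inr ⟨by linarith, by linarith⟩, Or.inl ⟨by linarith, by linarith⟩,
        by simp⟩
  · have hb : b < 0 := by nlinarith
    rcases le_total a (-b) with h | h
    · exact ⟨a, Or.inl ⟨ha, le_rfl⟩, Or.inr ⟨by linarith, by linarith⟩, by simp⟩
    · exact ⟨-b, Or.inl ⟨by linarith, h⟩, Or.inr ⟨by linarith, by linarith⟩, by simp⟩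

lemma exists_add_eq_add_forall_mul_nonneg {n : ℕ} {K K' : Set (EuclideanSpace ℝ (Fin n))}
    (hK : IsLocallyAntiBlocking K) (hKconv : Convex ℝ K)
    (hK' : IsLocallyAntiBlocking K') (hK'conv : Convex ℝ K')
    {x y : EuclideanSpace ℝ (Fin n)} (hx : x ∈ K) (hy : y ∈ K') :
    ∃ x' ∈ K, ∃ y' ∈ K', x' + y' = x + y ∧ ∀ i, 0 ≤ x' i * y' i := by
  suffices ∀ S : Finset (Fin n),
      ∃ x' ∈ K, ∃ y' ∈ K', x' + y' = x + y ∧ ∀ i ∈ S, 0 ≤ x' i * y' i by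
    simpa using this Finset.univ
  intro S
  induction S using Finset.induction_on with
  | empty => exact ⟨x, hx, y, hy, rfl, by simp⟩
  | insert i S _ ih =>
    obtain ⟨x', hx', y', hy', hsum, hS⟩ := ih
    obtain ⟨t, htx, hty, hti⟩ := exists_mem_uIcc_mul_nonneg (x' i) (y' i)
    refine ⟨x' - EuclideanSpace.single i t, hK.sub_single_mem hKconv hx' i htx,
      y' - EuclideanSpace.single i (-t), hK'.sub_single_mem hK'conv hy' i hty, ?_, ?_⟩
    · rw [← hsum]
      simp only [EuclideanSpace.single, PiLp.single_neg, sub_neg_eq_add]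
      abel
    · intro j hj
      rcases eq_or_ne j i with rfl | hji
      · simpa [sub_eq_add_neg] using hti
      · simpa [hji] using hS j ((Finset.mem_insert.1 hj).resolve_left hji)

lemma add_signedOrthant_subset {n : ℕ} (σ : Fin n → Bool) :
    signedOrthant σ + signedOrthant σ ⊆ signedOrthant σ := by
  rintro _ ⟨x, hx, y, hy, rfl⟩ i
  simpa [mul_add] using add_nonneg (hx i) (hy i)

lemma volume_signedOrthant_inter_signedOrthant {n : ℕ} {σ τ : Fin n → Bool} (h : σ ≠ τ) :
    volume (signedOrthant σ ∩ signedOrthant τ) = 0 := by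
  obtain ⟨i, hi⟩ := Function.ne_iff.1 h
  set E := LinearMap.ker (EuclideanSpace.projₗ (𝕜 := ℝ) (ι := Fin n) i)
  have hsub : signedOrthant σ ∩ signedOrthant τ ⊆ E := by
    rintro z ⟨hσ, hτ⟩
    have hσz := hσ i
    have hτz := hτ i
    cases hσi : σ i <;> cases hτi : τ i <;> simp_all [E, sgn] <;> linarith
  refine measure_mono_null hsub (Measure.addHaar_submodule _ _ fun htop => ?_)
  have : EuclideanSpace.single i (1 : ℝ) ∈ E := htop ▸ Submodule.mem_top
  simp [E] at this

theorem add_locally_antiblocking_dissection_general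
    (n : ℕ) (K K' : Set (EuclideanSpace ℝ (Fin n)))
    (hKconv : Convex ℝ K)
    (hKlab : IsLocallyAntiBlocking K)
    (hK'conv : Convex ℝ K')
    (hK'lab : IsLocallyAntiBlocking K') :
    (K + K' = ⋃ σ : Fin n → Bool, ((K ∩ signedOrthant σ) + (K' ∩ signedOrthant σ))) ∧
    (∀ σ τ : Fin n → Bool, σ ≠ τ →
      volume (((K ∩ signedOrthant σ) + (K' ∩ signedOrthant σ)) ∩
        ((K ∩ signedOrthant τ) + (K' ∩ signedOrthant τ))) = 0) := by
  have piece_subset (σ : Fin n → Bool) :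
      (K ∩ signedOrthant σ) + (K' ∩ signedOrthant σ) ⊆ signedOrthant σ :=
    (Set.add_subset_add Set.inter_subset_right Set.inter_subset_right).trans
      (add_signedOrthant_subset σ)
  refine ⟨subset_antisymm ?_ ?_, fun σ τ hστ => ?_⟩
  · rintro _ ⟨x, hx, y, hy, rfl⟩
    obtain ⟨x', hx', y', hy', hsum, hxy'⟩ :=
      exists_add_eq_add_forall_mul_nonneg hKlab hKconv hK'lab hK'conv hx hy
    choose σ hσ using fun i => exists_sgn_mul_nonneg (hxy' i)
    exact Set.mem_iUnion.2
      ⟨σ, x', ⟨hx', fun i => (hσ i).1⟩, y', ⟨hy', fun i => (hσ i).2⟩, hsum⟩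
  · exact Set.iUnion_subset fun σ =>
      Set.add_subset_add Set.inter_subset_left Set.inter_subset_left
  · exact measure_mono_null (Set.inter_subset_inter (piece_subset σ) (piece_subset τ))
      (volume_signedOrthant_inter_signedOrthant hστ)

/-- For locally anti-blocking bodies `K, K' ⊆ ℝⁿ`, the Minkowski sum dissects along orthants:
`K + K' = ⋃_σ (K_σ + K'_σ)`, and for `σ ≠ τ` the pieces intersect in Lebesgue measure zero. -/
theorem add_locally_antiblocking_dissection
    (n : ℕ) (K K' : Set (EuclideanSpace ℝ (Fin n)))
    (hKconv : Convex ℝ K) (hKcomp : IsCompact K) (hKne : K.Nonempty)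
    (hKlab : IsLocallyAntiBlocking K)
    (hK'conv : Convex ℝ K') (hK'comp : IsCompact K') (hK'ne : K'.Nonempty)
    (hK'lab : IsLocallyAntiBlocking K') :
    (K + K' = ⋃ σ : Fin n → Bool, ((K ∩ signedOrthant σ) + (K' ∩ signedOrthant σ))) ∧
    (∀ σ τ : Fin n → Bool, σ ≠ τ →
      volume (((K ∩ signedOrthant σ) + (K' ∩ signedOrthant σ)) ∩
        ((K ∩ signedOrthant τ) + (K' ∩ signedOrthant τ))) = 0) :=
  add_locally_antiblocking_dissection_general n K K' hKconv hKlab hK'conv hK'lab
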